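/- arXiv:2401.11955 — 3 statements merged into one kernel-verified Lean document; each statement's English description precedes it below -/
import Mathlib

section
/- Let s_n denote the n-th order Taylor polynomial at 0 of the function z ↦ (1+z)^{-n}. Then for every z ∈ ℂ with z ≠ -1, we have (1+z)^{-n} - s_n(z) = (-1)^{n+1} n ((2n)!/(n!)²) ∫_γ (z-t)^n / (1+t)^{2n+1} dt, where γ is any path from 0 to z avoiding -1. -/
/-!
Taylor's formula with integral remainder, run along a path: if `f k` is the `k`-th derivative
of `f 0`, then `w ↦ ∑_{k ≤ n} f k w (z - w)^k / k!` has derivative `f (n+1) w (z - w)^n / n!`,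
because the sum telescopes. Integrating this derivative along `γ` from `0` to `z` gives
`f 0 z - s_n(z)`. For `f 0 w = (1 + w)^(-n)` the derivatives are
`f k w = (-n)(-n-1)⋯(-n-k+1) (1 + w)^(-n-k)`, so `f k 0 / k! = (-1)^k C(n+k-1, k)` and
`f (n+1) w / n! = (-1)^(n+1) n C(2n, n) (1 + w)^(-2n-1)`.
-/

open Finset Set Nat

theorem integral_comp_mul_deriv_eq_sub_of_contDiffOn {F f : ℂ → ℂ} {γ : ℝ → ℂ} {a b : ℝ}
    (hab : a ≤ b) (hγ : ContDiffOn ℝ 1 γ (Icc a b))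
    (hF : ∀ t ∈ Icc a b, HasDerivAt F (f (γ t)) (γ t))
    (hf : ∀ t ∈ Icc a b, ContinuousAt f (γ t)) :
    ∫ t in a..b, f (γ t) * deriv γ t = F (γ b) - F (γ a) := by
  rcases hab.eq_or_lt with rfl | hlt
  · simp
  have hγ_deriv : ∀ t ∈ Ioo a b, HasDerivAt γ (deriv γ t) t := fun t ht =>
    ((hγ.differentiableOn one_ne_zero t (Ioo_subset_Icc_self ht)).differentiableAt
      (Icc_mem_nhds ht.1 ht.2)).hasDerivAt
  have hfγ : ContinuousOn (fun t => f (γ t)) (Icc a b) := fun t ht =>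
    (hf t ht).comp_continuousWithinAt (hγ.continuousOn t ht)
  -- `deriv γ` may be junk at the endpoints; `derivWithin` is continuous on the closed interval.
  have hint : IntervalIntegrable (fun t => f (γ t) * derivWithin γ (Icc a b) t)
      MeasureTheory.volume a b :=
    (hfγ.mul (hγ.continuousOn_derivWithin (uniqueDiffOn_Icc hlt) le_rfl)).intervalIntegrable_of_Icc
      hab
  refine intervalIntegral.integral_eq_sub_of_hasDerivAt_of_le hab
    (fun t ht => (hF t ht).continuousAt.comp_continuousWithinAt (hγ.continuousOn t ht))
    (fun t ht => (hF t (Ioo_subset_Icc_self ht)).comp t (hγ_deriv t ht))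
    (hint.congr_uIoo fun t ht => ?_)
  rw [uIoo_of_le hab] at ht
  simp only [derivWithin_of_mem_nhds (Icc_mem_nhds ht.1 ht.2)]

theorem hasDerivAt_taylor_sum {𝕜 : Type*} [RCLike 𝕜] {E : Type*} [NormedAddCommGroup E]
    [NormedSpace 𝕜 E] {f : ℕ → 𝕜 → E} {z w : 𝕜} (n : ℕ)
    (hf : ∀ k ≤ n, HasDerivAt (f k) (f (k + 1) w) w) :
    HasDerivAt (fun y => ∑ k ∈ range (n + 1), ((k ! : 𝕜)⁻¹ * (z - y) ^ k) • f k y)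
      (((n ! : 𝕜)⁻¹ * (z - w) ^ n) • f (n + 1) w) w := by
  induction n with
  | zero => simpa using hf 0 le_rfl
  | succ n ih =>
    simp_rw [sum_range_succ _ (n + 1)]
    have hpow : HasDerivAt (fun y => ((n + 1)! : 𝕜)⁻¹ * (z - y) ^ (n + 1))
        (-((n ! : 𝕜)⁻¹ * (z - w) ^ n)) w := by
      refine (((hasDerivAt_id' w).const_sub z).fun_pow (n + 1)).const_mul _ |>.congr_deriv ?_
      rw [Nat.add_sub_cancel, factorial_succ]
      push_cast
      field_simp
    convert (ih fun k hk => hf k (by omega)).fun_add (hpow.fun_smul (hf (n + 1) le_rfl)) using 1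
    rw [neg_smul]
    abel

theorem sub_taylor_sum_eq_integral_of_contDiffOn {f : ℕ → ℂ → ℂ} {γ : ℝ → ℂ} {a b : ℝ}
    (n : ℕ) (hab : a ≤ b) (hγ : ContDiffOn ℝ 1 γ (Icc a b))
    (hf : ∀ k ≤ n, ∀ t ∈ Icc a b, HasDerivAt (f k) (f (k + 1) (γ t)) (γ t))
    (hf_cont : ∀ t ∈ Icc a b, ContinuousAt (f (n + 1)) (γ t)) :
    f 0 (γ b) - ∑ k ∈ range (n + 1), (k ! : ℂ)⁻¹ * (γ b - γ a) ^ k * f k (γ a)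
      = (n ! : ℂ)⁻¹ * ∫ t in a..b, (γ b - γ t) ^ n * f (n + 1) (γ t) * deriv γ t := by
  have hF := integral_comp_mul_deriv_eq_sub_of_contDiffOn
    (F := fun y => ∑ k ∈ range (n + 1), ((k ! : ℂ)⁻¹ * (γ b - y) ^ k) • f k y)
    (f := fun y => ((n ! : ℂ)⁻¹ * (γ b - y) ^ n) • f (n + 1) y) hab hγ
    (fun t ht => hasDerivAt_taylor_sum n fun k hk => hf k hk t ht)
    (fun t ht => by have := hf_cont t ht; fun_prop)
  have h_end : ∑ k ∈ range (n + 1), (k ! : ℂ)⁻¹ * (γ b - γ b) ^ k * f k (γ b) = f 0 (γ b) := by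
    rw [sum_range_succ']
    simp
  simp only [smul_eq_mul] at hF
  rw [h_end] at hF
  rw [← hF, ← intervalIntegral.integral_const_mul]
  simp only [mul_assoc]

theorem hasDerivAt_prod_sub_mul_one_add_zpow {𝕜 : Type*} [NontriviallyNormedField 𝕜] (m : ℤ)
    (k : ℕ) {w : 𝕜} (hw : 1 + w ≠ 0) :
    HasDerivAt (fun y => (∏ i ∈ range k, ((m : 𝕜) - i)) * (1 + y) ^ (m - k))
      ((∏ i ∈ range (k + 1), ((m : 𝕜) - i)) * (1 + w) ^ (m - (k + 1 : ℕ))) w := by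
  have h := ((hasDerivAt_zpow (m - k) (1 + w) (Or.inl hw)).comp w
    ((hasDerivAt_id' w).const_add 1)).const_mul (∏ i ∈ range k, ((m : 𝕜) - i))
  refine h.congr_deriv ?_
  rw [prod_range_succ]
  push_cast
  ring_nf

theorem prod_range_neg_natCast_sub {R : Type*} [CommRing R] (n k : ℕ) :
    ∏ i ∈ range k, (-(n : R) - i) = (-1) ^ k * k ! * (n + k - 1).choose k := by
  calc ∏ i ∈ range k, (-(n : R) - i) = ∏ i ∈ range k, (-1 * ((n + i : ℕ) : R)) :=
        prod_congr rfl fun i _ => by push_cast; ring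
    _ = (-1) ^ k * (n.ascFactorial k : R) := by
        rw [prod_mul_distrib, prod_const, card_range, Nat.ascFactorial_eq_prod_range, cast_prod]
    _ = (-1) ^ k * k ! * (n + k - 1).choose k := by
        rw [Nat.ascFactorial_eq_factorial_mul_choose', cast_mul, mul_assoc]

theorem inv_factorial_mul_prod_range_succ_neg_natCast_sub (n : ℕ) :
    (n ! : ℂ)⁻¹ * ∏ i ∈ range (n + 1), (-(n : ℂ) - i)
      = (-1) ^ (n + 1) * n * ((2 * n)! / (n ! : ℂ) ^ 2) := by
  have hchoose : ((2 * n).choose (n + 1) * (n + 1) : ℂ) = n * ((2 * n)! / (n ! : ℂ) ^ 2) := by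
    have h := Nat.choose_succ_right_eq (2 * n) n
    rw [show 2 * n - n = n by omega] at h
    rw [← cast_succ, ← cast_mul, h, cast_mul, cast_choose ℂ (by omega : n ≤ 2 * n),
      show 2 * n - n = n by omega]
    ring
  have : (n ! : ℂ) ≠ 0 := cast_ne_zero.mpr n.factorial_ne_zero
  rw [prod_range_neg_natCast_sub, show n + (n + 1) - 1 = 2 * n by omega, factorial_succ,
    mul_assoc _ (n : ℂ), ← hchoose]
  push_cast
  field_simp

theorem taylor_remainder_one_add_z_pow_neg_n_general
    (n : ℕ) (z : ℂ)
    (γ : ℝ → ℂ) (hγ0 : γ 0 = 0) (hγ1 : γ 1 = z)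
    (hγ : ∀ t ∈ Set.Icc (0:ℝ) 1, γ t ≠ -1)
    (hγC1 : ContDiffOn ℝ 1 γ (Set.Icc (0:ℝ) 1)) :
    (1 + z) ^ (-(n:ℤ))
      - ∑ k ∈ Finset.range (n+1), (-1:ℂ)^k * (Nat.choose (n + k - 1) k) * z ^ k
    = (-1:ℂ)^(n+1) * n * ((Nat.factorial (2*n) : ℂ) / ((Nat.factorial n : ℂ))^2) *
        ∫ t in (0:ℝ)..1, (z - γ t) ^ n / (1 + γ t) ^ (2*n+1) * deriv γ t := by
  have h_ne : ∀ t ∈ Icc (0 : ℝ) 1, 1 + γ t ≠ 0 := fun t ht h =>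
    hγ t ht (eq_neg_of_add_eq_zero_right h)
  have h_deriv := fun k t ht => hasDerivAt_prod_sub_mul_one_add_zpow (-(n : ℤ)) k (h_ne t ht)
  have h := sub_taylor_sum_eq_integral_of_contDiffOn n zero_le_one hγC1
    (fun k _ t ht => h_deriv k t ht) (fun t ht => (h_deriv (n + 1) t ht).continuousAt)
  have h_coeff (k : ℕ) : (k ! : ℂ)⁻¹ * z ^ k * ∏ i ∈ range k, (-(n : ℂ) - i)
      = (-1) ^ k * (n + k - 1).choose k * z ^ k := by
    have : (k ! : ℂ) ≠ 0 := cast_ne_zero.mpr k.factorial_ne_zero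
    rw [prod_range_neg_natCast_sub]
    field_simp
  have h_integrand (t : ℝ) : (z - γ t) ^ n * ((∏ i ∈ range (n + 1), (-(n : ℂ) - i))
      * (1 + γ t) ^ (-(n : ℤ) - (n + 1 : ℕ))) * deriv γ t
      = (∏ i ∈ range (n + 1), (-(n : ℂ) - i)) * ((z - γ t) ^ n / (1 + γ t) ^ (2 * n + 1)
        * deriv γ t) := by
    rw [show -(n : ℤ) - (n + 1 : ℕ) = -((2 * n + 1 : ℕ) : ℤ) by push_cast; ring, zpow_neg,
      zpow_natCast]
    ring
  simp only [hγ0, hγ1, Int.cast_neg, Int.cast_natCast, sub_zero, add_zero, one_zpow, mul_one,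
    h_coeff, h_integrand, prod_range_zero, one_mul, CharP.cast_eq_zero] at h
  rwa [intervalIntegral.integral_const_mul, ← mul_assoc,
    inv_factorial_mul_prod_range_succ_neg_natCast_sub] at h

/-- Integral-remainder formula for the n-th Taylor polynomial at 0 of (1+z)^{-n},
valid along any C¹ path from 0 to z avoiding -1. -/
theorem taylor_remainder_one_add_z_pow_neg_n
    (n : ℕ) (z : ℂ) (hz : z ≠ -1)
    (γ : ℝ → ℂ) (hγ0 : γ 0 = 0) (hγ1 : γ 1 = z)
    (hγ : ∀ t ∈ Set.Icc (0:ℝ) 1, γ t ≠ -1)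
    (hγC1 : ContDiffOn ℝ 1 γ (Set.Icc (0:ℝ) 1)) :
    (1 + z) ^ (-(n:ℤ))
      - ∑ k ∈ Finset.range (n+1), (-1:ℂ)^k * (Nat.choose (n + k - 1) k) * z ^ k
    = (-1:ℂ)^(n+1) * n * ((Nat.factorial (2*n) : ℂ) / ((Nat.factorial n : ℂ))^2) *
        ∫ t in (0:ℝ)..1, (z - γ t) ^ n / (1 + γ t) ^ (2*n+1) * deriv γ t :=
  taylor_remainder_one_add_z_pow_neg_n_general n z γ hγ0 hγ1 hγ hγC1
end

section
/- Let G = {(z₁, z₂) ∈ ℂ² : |z₁ − a₁| < r₁, |z₂ − a₂| < r₂} be a bidisk with r₂ < |a₂|, and let F(z₁, z₂) = (z₂, z₁z₂). Then the image K = F(closure G) is polynomially convex: for every (w₁°, w₂°) ∉ K there exists a holomorphic polynomial Q in two variables with |Q(w₁°, w₂°)| > sup_{K} |Q|. -/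
/-!
Writing `K = {w : |w₁ - a₂| ≤ r₂, |w₂ / w₁ - a₁| ≤ r₁}`, a point `w ∉ K` either has
`|w₁ - a₂| > r₂`, and is separated by `w₁ - a₂`, or has `|w₂ / w₁ - a₁| > r₁`. In the second case
`1 / w₁` is approximated on the disk `|w₁ - a₂| ≤ r₂` by the partial sums
`a₂⁻¹ ∑_{k<m} (1 - w₁ / a₂)^k`, with error governed by `(r₂ / |a₂|)^m → 0`, so that
`(w₂ - a₁ w₁) · a₂⁻¹ ∑_{k<m} (1 - w₁ / a₂)^k = (w₂ / w₁ - a₁)(1 - (1 - w₁ / a₂)^m)`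
separates `w` from `K` once `m` is large.
-/

open Finset MvPolynomial

lemma closure_setOf_norm_sub_lt_prod {E F : Type*} [NormedAddCommGroup E] [NormedSpace ℝ E]
    [NormedAddCommGroup F] [NormedSpace ℝ F] {a₁ : E} {a₂ : F} {r₁ r₂ : ℝ}
    (hr₁ : 0 < r₁) (hr₂ : 0 < r₂) :
    closure {z : E × F | ‖z.1 - a₁‖ < r₁ ∧ ‖z.2 - a₂‖ < r₂} =
      {z : E × F | ‖z.1 - a₁‖ ≤ r₁ ∧ ‖z.2 - a₂‖ ≤ r₂} := by
  have hball : {z : E × F | ‖z.1 - a₁‖ < r₁ ∧ ‖z.2 - a₂‖ < r₂} =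
      Metric.ball a₁ r₁ ×ˢ Metric.ball a₂ r₂ := by
    ext z; simp [dist_eq_norm]
  rw [hball, closure_prod_eq, closure_ball _ hr₁.ne', closure_ball _ hr₂.ne']
  ext z; simp [dist_eq_norm]

lemma sSup_image_lt_of_forall_le {α : Type*} {s : Set α} (hs : s.Nonempty) {f : α → ℝ}
    {b c : ℝ} (hf : ∀ x ∈ s, f x ≤ b) (hbc : b < c) : sSup (f '' s) < c :=
  (csSup_le (hs.image f) (Set.forall_mem_image.2 hf)).trans_lt hbc

lemma exists_mul_one_add_pow_lt_mul_one_sub_pow {r s ρ : ℝ} (hrs : r < s) (hρ₀ : 0 ≤ ρ)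
    (hρ₁ : ρ < 1) : ∃ m : ℕ, r * (1 + ρ ^ m) < s * (1 - ρ ^ m) := by
  have hlim : Filter.Tendsto (fun m : ℕ => (s - r) - (s + r) * ρ ^ m) Filter.atTop
      (nhds ((s - r) - (s + r) * 0)) :=
    tendsto_const_nhds.sub ((tendsto_pow_atTop_nhds_zero_of_lt_one hρ₀ hρ₁).const_mul _)
  obtain ⟨m, hm⟩ := (hlim.eventually (lt_mem_nhds (by linarith : (0 : ℝ) < _))).exists
  exact ⟨m, by linarith⟩

section Separation

variable {𝕜 : Type*}

noncomputable def approxDivSub [Field 𝕜] (a₁ a₂ : 𝕜) (m : ℕ) : MvPolynomial (Fin 2) 𝕜 :=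
  (X 1 - C a₁ * X 0) * (C a₂⁻¹ * ∑ k ∈ range m, (1 - X 0 * C a₂⁻¹) ^ k)

lemma eval_approxDivSub [Field 𝕜] {a₂ u : 𝕜} (ha₂ : a₂ ≠ 0) (hu : u ≠ 0) (a₁ v : 𝕜) (m : ℕ) :
    eval ![u, v] (approxDivSub a₁ a₂ m) = (v / u - a₁) * (1 - (1 - u / a₂) ^ m) := by
  rw [← mul_neg_geom_sum]
  simp only [approxDivSub, map_mul, map_sub, map_sum, map_pow, map_one, eval_X, eval_C,
    Matrix.cons_val_zero, Matrix.cons_val_one, Matrix.cons_val_fin_one, sub_sub_cancel]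
  field_simp

variable [NormedField 𝕜]

lemma norm_one_sub_div_le {a u : 𝕜} {r : ℝ} (ha : a ≠ 0) (hu : ‖u - a‖ ≤ r) :
    ‖1 - u / a‖ ≤ r / ‖a‖ := by
  rw [one_sub_div ha, norm_div, norm_sub_rev]
  gcongr

lemma ne_zero_of_norm_sub_le {a u : 𝕜} {r : ℝ} (h : r < ‖a‖) (hu : ‖u - a‖ ≤ r) : u ≠ 0 := by
  rintro rfl
  rw [zero_sub, norm_neg] at hu
  linarith

lemma norm_one_sub_pow_le {t : 𝕜} {ρ : ℝ} (ht : ‖t‖ ≤ ρ) (m : ℕ) : ‖1 - t ^ m‖ ≤ 1 + ρ ^ m := by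
  calc ‖1 - t ^ m‖ ≤ ‖(1 : 𝕜)‖ + ‖t‖ ^ m := by rw [← norm_pow]; exact norm_sub_le _ _
    _ ≤ 1 + ρ ^ m := by rw [norm_one]; gcongr

lemma one_sub_pow_le_norm_one_sub_pow {t : 𝕜} {ρ : ℝ} (ht : ‖t‖ ≤ ρ) (m : ℕ) :
    1 - ρ ^ m ≤ ‖1 - t ^ m‖ := by
  calc 1 - ρ ^ m ≤ ‖(1 : 𝕜)‖ - ‖t‖ ^ m := by rw [norm_one]; gcongr
    _ ≤ ‖1 - t ^ m‖ := by rw [← norm_pow]; exact norm_sub_norm_le _ _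

variable {a₁ a₂ : 𝕜} {r₁ r₂ : ℝ}

lemma norm_eval_approxDivSub_le {z₁ z₂ : 𝕜} (h : r₂ < ‖a₂‖) (hz₁ : ‖z₁ - a₁‖ ≤ r₁)
    (hz₂ : ‖z₂ - a₂‖ ≤ r₂) (m : ℕ) :
    ‖eval ![z₂, z₁ * z₂] (approxDivSub a₁ a₂ m)‖ ≤ r₁ * (1 + (r₂ / ‖a₂‖) ^ m) := by
  have ha₂ : a₂ ≠ 0 := norm_pos_iff.1 ((norm_nonneg _).trans_lt (hz₂.trans_lt h))
  have hz₂₀ : z₂ ≠ 0 := ne_zero_of_norm_sub_le h hz₂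
  rw [eval_approxDivSub ha₂ hz₂₀, mul_div_cancel_right₀ _ hz₂₀, norm_mul]
  exact mul_le_mul hz₁ (norm_one_sub_pow_le (norm_one_sub_div_le ha₂ hz₂) m) (norm_nonneg _)
    ((norm_nonneg _).trans hz₁)

lemma mul_one_sub_pow_le_norm_eval_approxDivSub {u : 𝕜} (h : r₂ < ‖a₂‖) (hu : ‖u - a₂‖ ≤ r₂)
    (v : 𝕜) (m : ℕ) :
    ‖v / u - a₁‖ * (1 - (r₂ / ‖a₂‖) ^ m) ≤ ‖eval ![u, v] (approxDivSub a₁ a₂ m)‖ := by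
  have ha₂ : a₂ ≠ 0 := norm_pos_iff.1 ((norm_nonneg _).trans_lt (hu.trans_lt h))
  rw [eval_approxDivSub ha₂ (ne_zero_of_norm_sub_le h hu), norm_mul]
  exact mul_le_mul_of_nonneg_left
    (one_sub_pow_le_norm_one_sub_pow (norm_one_sub_div_le ha₂ hu) m) (norm_nonneg _)

lemma lt_norm_div_sub_of_notMem_image {w : 𝕜 × 𝕜} (h : r₂ < ‖a₂‖) (hw₁ : ‖w.1 - a₂‖ ≤ r₂)
    (hw : w ∉ (fun z : 𝕜 × 𝕜 => (z.2, z.1 * z.2)) ''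
      {z | ‖z.1 - a₁‖ ≤ r₁ ∧ ‖z.2 - a₂‖ ≤ r₂}) :
    r₁ < ‖w.2 / w.1 - a₁‖ := by
  by_contra! hle
  refine hw ⟨(w.2 / w.1, w.1), ⟨hle, hw₁⟩, ?_⟩
  simp [div_mul_cancel₀ _ (ne_zero_of_norm_sub_le h hw₁)]

end Separation

/-- The image K = F(closure G) of the closed bidisk under F(z₁,z₂) = (z₂, z₁z₂)
is polynomially convex: every point outside K is separated from K by a
holomorphic polynomial in two variables. -/
theorem image_bidisk_polynomially_convex
    (a₁ a₂ : ℂ) (r₁ r₂ : ℝ) (hr₁ : 0 < r₁) (hr₂ : 0 < r₂) (h : r₂ < ‖a₂‖)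
    (G : Set (ℂ × ℂ))
    (hG : G = {z : ℂ × ℂ | ‖z.1 - a₁‖ < r₁ ∧ ‖z.2 - a₂‖ < r₂})
    (K : Set (ℂ × ℂ)) (hK : K = (fun z : ℂ × ℂ => (z.2, z.1 * z.2)) '' closure G)
    (w : ℂ × ℂ) (hw : w ∉ K) :
    ∃ Q : MvPolynomial (Fin 2) ℂ,
      sSup ((fun v : ℂ × ℂ => ‖MvPolynomial.eval ![v.1, v.2] Q‖) '' K)
        < ‖MvPolynomial.eval ![w.1, w.2] Q‖ := by
  rw [hG, closure_setOf_norm_sub_lt_prod hr₁ hr₂] at hK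
  subst hK
  have hB : Set.Nonempty {z : ℂ × ℂ | ‖z.1 - a₁‖ ≤ r₁ ∧ ‖z.2 - a₂‖ ≤ r₂} :=
    ⟨(a₁, a₂), by simp [hr₁.le, hr₂.le]⟩
  by_cases hw₁ : ‖w.1 - a₂‖ ≤ r₂
  · have hc := lt_norm_div_sub_of_notMem_image h hw₁ hw
    obtain ⟨m, hm⟩ := exists_mul_one_add_pow_lt_mul_one_sub_pow hc
      (div_nonneg hr₂.le (norm_nonneg a₂)) ((div_lt_one (hr₂.trans h)).2 h)
    refine ⟨approxDivSub a₁ a₂ m, sSup_image_lt_of_forall_le (hB.image _) ?_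
      (hm.trans_le (mul_one_sub_pow_le_norm_eval_approxDivSub h hw₁ w.2 m))⟩
    rintro _ ⟨z, ⟨hz₁, hz₂⟩, rfl⟩
    exact norm_eval_approxDivSub_le h hz₁ hz₂ m
  · refine ⟨X 0 - C a₂, sSup_image_lt_of_forall_le (hB.image _) ?_ (by simpa using not_le.1 hw₁)⟩
    rintro _ ⟨z, ⟨-, hz₂⟩, rfl⟩
    simpa using hz₂
end

section
/- Let a₂ > 0 and 0 < r₂ < a₂, a₁ ∈ ℂ, r₁ > 0, and K as above. Fix (w₁°, w₂°) with |w₁° − a₂| ≤ r₂ and |w₂°/w₁° − a₁| = (1+δ)r₁ for some δ > 0. Then for any polynomial p(w₁) with sup_{|w₁−a₂|≤r₂} |p(w₁) − 1/w₁| < ε where ε < δ r₁ / (|w₂°| + (|a₂|+r₂)(|a₁|+r₁)), the polynomial Q(w₁,w₂) = w₂ p(w₁) − a₁ satisfies |Q(w₁°, w₂°)| > sup_K |Q|. -/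
/-!
For `z ≠ 0` we have `w * q - a = (w / z - a) + w * (q - 1 / z)`, so when `q = p z` approximates
`1 / z` within `ε`, the value of `Q` differs from `w / z - a₁` by at most `‖w‖ ε`. On `K` this gives
`|Q| ≤ r₁ + (a₂ + r₂)(|a₁| + r₁) ε`, while at the given point `|Q| ≥ (1 + δ) r₁ - |w₂°| ε`;
the bound on `ε` is exactly what makes the second number exceed the first.
-/

section NormedField

variable {𝕜 : Type*} [NormedField 𝕜]

lemma ne_zero_of_norm_sub_le_of_lt_norm {z c : 𝕜} {r : ℝ} (hz : ‖z - c‖ ≤ r) (hr : r < ‖c‖) :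
    z ≠ 0 := by
  rintro rfl
  rw [zero_sub, norm_neg] at hz
  linarith

lemma mul_sub_eq_div_sub_add_mul_sub_one_div {z : 𝕜} (hz : z ≠ 0) (w q a : 𝕜) :
    w * q - a = (w / z - a) + w * (q - 1 / z) := by
  field_simp
  ring

lemma norm_mul_sub_le_of_norm_sub_one_div_le {z w a c q : 𝕜} {r₁ r₂ ε : ℝ}
    (hz : ‖z - c‖ ≤ r₂) (hr₂ : r₂ < ‖c‖) (hw : ‖w / z - a‖ ≤ r₁) (hq : ‖q - 1 / z‖ ≤ ε) :
    ‖w * q - a‖ ≤ r₁ + (‖c‖ + r₂) * (‖a‖ + r₁) * ε := by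
  have hz₀ : z ≠ 0 := ne_zero_of_norm_sub_le_of_lt_norm hz hr₂
  have hz_norm : ‖z‖ ≤ ‖c‖ + r₂ := norm_le_of_mem_closedBall (mem_closedBall_iff_norm.2 hz)
  have hwz_norm : ‖w / z‖ ≤ ‖a‖ + r₁ := by
    simpa [add_comm] using norm_le_of_mem_closedBall (mem_closedBall_iff_norm.2 hw)
  have hw_norm : ‖w‖ ≤ (‖c‖ + r₂) * (‖a‖ + r₁) := by
    calc ‖w‖ = ‖z‖ * ‖w / z‖ := by rw [norm_div, mul_div_cancel₀ _ (norm_ne_zero_iff.2 hz₀)]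
      _ ≤ (‖c‖ + r₂) * (‖a‖ + r₁) := by gcongr; exact (norm_nonneg _).trans hz_norm
  calc ‖w * q - a‖ ≤ ‖w / z - a‖ + ‖w‖ * ‖q - 1 / z‖ := by
        rw [mul_sub_eq_div_sub_add_mul_sub_one_div hz₀, ← norm_mul]; exact norm_add_le _ _
    _ ≤ r₁ + (‖c‖ + r₂) * (‖a‖ + r₁) * ε := by
        gcongr; exact (norm_nonneg _).trans hw_norm

lemma norm_div_sub_sub_le_norm_mul_sub {z w a q : 𝕜} {ε : ℝ} (hz : z ≠ 0)
    (hq : ‖q - 1 / z‖ ≤ ε) :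
    ‖w / z - a‖ - ‖w‖ * ε ≤ ‖w * q - a‖ := by
  have hsplit : w / z - a = (w * q - a) - w * (q - 1 / z) := by
    rw [mul_sub_eq_div_sub_add_mul_sub_one_div hz, add_sub_cancel_right]
  have h := norm_sub_le (w * q - a) (w * (q - 1 / z))
  rw [← hsplit, norm_mul] at h
  have : ‖w‖ * ‖q - 1 / z‖ ≤ ‖w‖ * ε := by gcongr
  linarith

end NormedField

theorem separation_by_Q_general
    (a₁ : ℂ) (a₂ r₁ r₂ δ ε : ℝ)
    (ha₂ : 0 < a₂) (hr₂ : 0 < r₂) (hr₂a : r₂ < a₂) (hr₁ : 0 < r₁)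
    (K : Set (ℂ × ℂ))
    (hK : K = {w : ℂ × ℂ | ‖w.1 - (a₂:ℂ)‖ ≤ r₂ ∧ ‖w.2 / w.1 - a₁‖ ≤ r₁})
    (w₁ w₂ : ℂ)
    (hw₁ : ‖w₁ - (a₂:ℂ)‖ ≤ r₂)
    (hw₂ : ‖w₂ / w₁ - a₁‖ = (1 + δ) * r₁)
    (p : Polynomial ℂ)
    (hp : ∀ u : ℂ, ‖u - (a₂:ℂ)‖ ≤ r₂ → ‖p.eval u - 1 / u‖ < ε)
    (hε : ε < δ * r₁ / (‖w₂‖ + (a₂ + r₂) * (‖a₁‖ + r₁))) :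
    sSup ((fun v : ℂ × ℂ => ‖v.2 * p.eval v.1 - a₁‖) '' K)
      < ‖w₂ * p.eval w₁ - a₁‖ := by
  subst hK
  have ha₂_norm : ‖(a₂ : ℂ)‖ = a₂ := Complex.norm_of_nonneg ha₂.le
  have hr₂a' : r₂ < ‖(a₂ : ℂ)‖ := by rwa [ha₂_norm]
  have hε₀ : 0 ≤ ε := (norm_nonneg _).trans (hp w₁ hw₁).le
  have hgap : ε * (‖w₂‖ + (a₂ + r₂) * (‖a₁‖ + r₁)) < δ * r₁ :=
    (lt_div_iff₀ (by positivity)).1 hε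
  have hupper : sSup ((fun v : ℂ × ℂ => ‖v.2 * p.eval v.1 - a₁‖) ''
      {w : ℂ × ℂ | ‖w.1 - (a₂:ℂ)‖ ≤ r₂ ∧ ‖w.2 / w.1 - a₁‖ ≤ r₁})
      ≤ r₁ + (a₂ + r₂) * (‖a₁‖ + r₁) * ε := by
    refine Real.sSup_le ?_ (by positivity)
    rintro _ ⟨v, ⟨hv₁, hv₂⟩, rfl⟩
    simpa only [ha₂_norm] using
      norm_mul_sub_le_of_norm_sub_one_div_le hv₁ hr₂a' hv₂ (hp v.1 hv₁).le
  have hlower := norm_div_sub_sub_le_norm_mul_sub (w := w₂) (a := a₁)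
    (ne_zero_of_norm_sub_le_of_lt_norm hw₁ hr₂a') (hp w₁ hw₁).le
  rw [hw₂] at hlower
  linarith

/-- Separation of a point with |w₂°/w₁° - a₁| = (1+δ)r₁ from
K = {(w₁,w₂) : |w₁ - a₂| ≤ r₂, |w₂/w₁ - a₁| ≤ r₁} by the polynomial
Q(w₁,w₂) = w₂ p(w₁) - a₁, where p approximates 1/w₁ within ε on the disk. -/
theorem separation_by_Q
    (a₁ : ℂ) (a₂ r₁ r₂ δ ε : ℝ)
    (ha₂ : 0 < a₂) (hr₂ : 0 < r₂) (hr₂a : r₂ < a₂) (hr₁ : 0 < r₁) (hδ : 0 < δ)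
    (K : Set (ℂ × ℂ))
    (hK : K = {w : ℂ × ℂ | ‖w.1 - (a₂:ℂ)‖ ≤ r₂ ∧ ‖w.2 / w.1 - a₁‖ ≤ r₁})
    (w₁ w₂ : ℂ)
    (hw₁ : ‖w₁ - (a₂:ℂ)‖ ≤ r₂)
    (hw₂ : ‖w₂ / w₁ - a₁‖ = (1 + δ) * r₁)
    (p : Polynomial ℂ)
    (hp : ∀ u : ℂ, ‖u - (a₂:ℂ)‖ ≤ r₂ → ‖p.eval u - 1 / u‖ < ε)
    (hε : ε < δ * r₁ / (‖w₂‖ + (a₂ + r₂) * (‖a₁‖ + r₁))) :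
    sSup ((fun v : ℂ × ℂ => ‖v.2 * p.eval v.1 - a₁‖) '' K)
      < ‖w₂ * p.eval w₁ - a₁‖ :=
  separation_by_Q_general a₁ a₂ r₁ r₂ δ ε ha₂ hr₂ hr₂a hr₁ K hK w₁ w₂ hw₁ hw₂ p hp hε
end
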